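/- arXiv:1702.07500 — 6 statements merged into one kernel-verified Lean document; each statement's English description precedes it below -/
import Mathlib

section
/- Let $p$ be an odd prime power. Then the multiset $\{0\} \cup \underline{2}\mathbb{F}_p^{\Box}$, consisting of $0$ together with each nonzero square of $\mathbb{F}_p$ taken twice, is an $(\mathbb{F}_p, p, p-1)$ strong difference family (with a single base block); i.e., every element of $\mathbb{F}_p$ occurs exactly $p-1$ times among the differences of distinct positions of this multiset. -/
open scoped Classical

/-- The multiset of differences over all ordered pairs of *distinct positions* of a
multiset `M`: all differences of ordered pairs of elements (with multiplicity), minus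
one copy of `0` for each position paired with itself. -/
def msetDiffs {G : Type*} [AddCommGroup G] [DecidableEq G] (M : Multiset G) : Multiset G :=
  (M.bind fun x => M.map fun y => x - y) - Multiset.replicate (Multiset.card M) 0

/-! With `χ` the quadratic character of `F` and `q = |F|`, the multiplicity of `x` in the Paley
multiset is `1 + χ x`. Counting `g` among the differences of all ordered pairs, diagonal included,
gives the correlation `∑ₓ (1 + χ x) (1 + χ (x - g)) = q + ∑ₓ χ x χ (x - g)`, since `χ` sums to `0`.
The last sum is `q - 1` at `g = 0`; for `g ≠ 0` the substitution `x = g y` turns it into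
`χ(-1) J(χ, χ) = -χ(-1)² = -1`. Removing the `q` diagonal pairs at `0` leaves `q - 1` for every `g`.
-/

open Finset

section Autocorrelation

variable {G : Type*} [AddCommGroup G] [Fintype G] [DecidableEq G]

lemma Multiset.count_bind_map_sub (M : Multiset G) (g : G) :
    (M.bind fun x => M.map fun y => x - y).count g = ∑ x, M.count x * M.count (x - g) := by
  have hshift (x : G) : (M.map fun y => x - y).count g = M.count (x - g) := by
    simpa using Multiset.count_map_eq_count' (x - ·) M sub_right_injective (x - g)
  rw [Multiset.count_bind, Multiset.map_congr rfl fun x _ => hshift x,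
    Finset.sum_multiset_map_count]
  exact Finset.sum_subset (subset_univ _) fun x _ hx => by simp_all

lemma Multiset.card_le_count_bind_map_sub_zero (M : Multiset G) :
    M.card ≤ (M.bind fun x => M.map fun y => x - y).count 0 := by
  rw [Multiset.count_bind_map_sub, ← Multiset.sum_count_eq_card fun a _ => mem_univ a]
  exact sum_le_sum fun x _ => by simpa using Nat.le_mul_self _

lemma count_msetDiffs (M : Multiset G) (g : G) :
    ((msetDiffs M).count g : ℤ) =
      ∑ x, (M.count x : ℤ) * M.count (x - g) - if g = 0 then (M.card : ℤ) else 0 := by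
  rw [msetDiffs, Multiset.count_sub, Multiset.count_replicate]
  obtain rfl | hg := eq_or_ne g 0
  · rw [if_pos rfl, Nat.cast_sub (Multiset.card_le_count_bind_map_sub_zero M),
      Multiset.count_bind_map_sub]
    simp
  · simp [hg, Ne.symm hg, Multiset.count_bind_map_sub]

end Autocorrelation

section CharacterSums

variable {F R : Type*} [Field F] [CommRing R] {χ : MulChar F R}

lemma MulChar.IsQuadratic.apply_mul_apply_self (hχ : χ.IsQuadratic) {a : F} (ha : a ≠ 0) :
    χ a * χ a = 1 := by
  rw [← MulChar.mul_apply, ← sq, hχ.sq_eq_one, MulChar.one_apply ha.isUnit]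

variable [Fintype F]

lemma MulChar.sum_one_add_mul_one_add_apply_sub [IsDomain R] (hχ1 : χ ≠ 1) (g : F) :
    ∑ x, (1 + χ x) * (1 + χ (x - g)) = Fintype.card F + ∑ x, χ x * χ (x - g) := by
  have hsum := MulChar.sum_eq_zero_of_ne_one hχ1
  have hsum_sub : ∑ x, χ (x - g) = 0 :=
    (Fintype.sum_equiv (Equiv.subRight g) _ _ fun _ => rfl).trans hsum
  simp only [add_mul, mul_add, one_mul, mul_one, sum_add_distrib, hsum, hsum_sub]
  simp

lemma MulChar.IsQuadratic.sum_apply_mul_apply_sub_of_ne_zero [IsDomain R] (hχ : χ.IsQuadratic)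
    (hχ1 : χ ≠ 1) {g : F} (hg : g ≠ 0) : ∑ x, χ x * χ (x - g) = -1 := by
  have hterm (y : F) : χ (g * y) * χ (g * y - g) = χ (-1) * (χ y * χ (1 - y)) := by
    rw [show g * y - g = g * (-1) * (1 - y) by ring, map_mul, map_mul, map_mul]
    linear_combination (χ (-1) * χ y * χ (1 - y)) * hχ.apply_mul_apply_self hg
  calc ∑ x, χ x * χ (x - g) = ∑ y, χ (g * y) * χ (g * y - g) :=
        (Fintype.sum_equiv (Equiv.mulLeft₀ g hg) _ _ fun _ => rfl).symm
    _ = χ (-1) * jacobiSum χ χ⁻¹ := by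
        rw [hχ.inv, jacobiSum, Finset.mul_sum]; exact Fintype.sum_congr _ _ hterm
    _ = -1 := by
        rw [jacobiSum_nontrivial_inv hχ1, mul_neg,
          hχ.apply_mul_apply_self (neg_ne_zero.mpr one_ne_zero)]

lemma MulChar.IsQuadratic.sum_apply_mul_apply_self [DecidableEq F] (hχ : χ.IsQuadratic) :
    ∑ x, χ x * χ x = Fintype.card F - 1 := by
  rw [← Finset.sum_erase_add _ _ (mem_univ 0), MulChar.map_zero, zero_mul, add_zero,
    Finset.sum_congr rfl fun x hx => hχ.apply_mul_apply_self (ne_of_mem_erase hx)]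
  simp [card_erase_of_mem, Nat.cast_pred Fintype.card_pos]

end CharacterSums

section Paley

variable (F : Type*) [Field F] [Fintype F] [DecidableEq F]

def paleyMultiset : Multiset F :=
  (0 : F) ::ₘ (2 • (Finset.univ.filter fun x : F => x ≠ 0 ∧ IsSquare x).val)

variable {F}

lemma count_paleyMultiset (x : F) : ((paleyMultiset F).count x : ℤ) = 1 + quadraticChar F x := by
  rw [paleyMultiset, Multiset.count_cons, Multiset.count_nsmul,
    Multiset.count_eq_of_nodup (Finset.nodup _)]
  obtain rfl | hx := eq_or_ne x 0
  · simp
  by_cases hsq : IsSquare x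
  · simp [hx, hsq, (quadraticChar_one_iff_isSquare hx).mpr hsq]
  · simp [hx, hsq, quadraticChar_neg_one_iff_not_isSquare.mpr hsq]

lemma card_paleyMultiset (hF : ringChar F ≠ 2) : (paleyMultiset F).card = Fintype.card F := by
  zify
  rw [← Multiset.sum_count_eq_card fun a _ => mem_univ a]
  push_cast
  simp only [count_paleyMultiset, sum_add_distrib, quadraticChar_sum_zero hF]
  simp

lemma sum_count_mul_count_sub_paleyMultiset (hF : ringChar F ≠ 2) (g : F) :
    ∑ x, ((paleyMultiset F).count x : ℤ) * (paleyMultiset F).count (x - g) =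
      Fintype.card F + if g = 0 then (Fintype.card F : ℤ) - 1 else -1 := by
  have hχ := quadraticChar_isQuadratic F
  simp only [count_paleyMultiset]
  rw [MulChar.sum_one_add_mul_one_add_apply_sub (quadraticChar_ne_one hF)]
  obtain rfl | hg := eq_or_ne g 0
  · simp only [sub_zero, hχ.sum_apply_mul_apply_self, if_pos]
  · rw [hχ.sum_apply_mul_apply_sub_of_ne_zero (quadraticChar_ne_one hF) hg, if_neg hg]

end Paley

/-- Paley difference multiset of the first type: for an odd prime power `p` (a finite
field `F` of odd order), the multiset `{0} ∪ 2·F□` consisting of `0` together with each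
nonzero square taken twice is an `(F_p, p, p-1)` strong difference family: it has size
`p` and every element of `F_p` occurs exactly `p-1` times among the differences of its
distinct positions. -/
theorem paper_stmt_3 {F : Type*} [Field F] [Fintype F] [DecidableEq F]
    (hodd : Odd (Fintype.card F)) :
    let M : Multiset F :=
      (0 : F) ::ₘ (2 • (Finset.univ.filter fun x : F => x ≠ 0 ∧ IsSquare x).val)
    Multiset.card M = Fintype.card F ∧
      ∀ g : F, Multiset.count g (msetDiffs M) = Fintype.card F - 1 := by
  have hF : ringChar F ≠ 2 := fun h => by
    have := FiniteField.even_card_of_char_two h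
    rw [Nat.odd_iff] at hodd
    omega
  change (paleyMultiset F).card = _ ∧ ∀ g, (msetDiffs (paleyMultiset F)).count g = _
  refine ⟨card_paleyMultiset hF, fun g => ?_⟩
  zify [Fintype.card_pos]
  rw [count_msetDiffs, sum_count_mul_count_sub_paleyMultiset hF, card_paleyMultiset hF]
  split_ifs <;> ring
end

section
/- Let $p \equiv 3 \pmod 4$ be a prime power. Then the multiset $\underline{2}(\{0\} \cup \mathbb{F}_p^{\Box})$, consisting of $0$ and each nonzero square of $\mathbb{F}_p$, all taken with multiplicity $2$, is an $(\mathbb{F}_p, p+1, p+1)$ strong difference family with a single base block; i.e., every element of $\mathbb{F}_p$ occurs exactly $p+1$ times among the differences of distinct positions of this multiset. -/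
open scoped Classical

/-!
Let `S` be the set of squares of `F`, `0` included, so that the multiset is `2·S` and each
difference of two elements of `S` occurs four times among its differences. Let `N g` count
the ways of writing `g` as such a difference. Multiplying by a nonzero square permutes `S`,
and `N (-g) = N g`; as `-1` is not a square, every nonzero element is `±` a square, so `N`
is constant on `Fˣ`. Counting all pairs gives `|S| + (q - 1) N 1 = |S|²`, and with
`2|S| = q + 1` this is `4 N g = q + 1` for `g ≠ 0`.
-/

open Finset

section DiffCount

variable {G : Type*} [AddCommGroup G] [DecidableEq G]

def diffCount (A : Finset G) (g : G) : ℕ := #{a ∈ A | a - g ∈ A}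

theorem diffCount_zero (A : Finset G) : diffCount A 0 = #A := by
  simp [diffCount]

theorem diffCount_neg (A : Finset G) (g : G) : diffCount A (-g) = diffCount A g := by
  refine card_nbij' (· + g) (· - g) ?_ ?_ ?_ ?_ <;> intro a <;> simp_all

theorem sum_diffCount [Fintype G] (A : Finset G) : ∑ g, diffCount A g = #A ^ 2 := by
  have hrow (a : G) : ∑ g, (if a - g ∈ A then 1 else 0) = #A := by
    rw [Fintype.sum_equiv (Equiv.subLeft a) (fun g => if a - g ∈ A then 1 else 0)
      (fun b => if b ∈ A then 1 else 0) fun _ => rfl]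
    simp
  simp_rw [diffCount, card_filter]
  rw [sum_comm, sum_congr rfl fun a _ => hrow a, sum_const, smul_eq_mul, sq]

theorem count_bind_map_sub (A : Finset G) (g : G) :
    (A.val.bind fun x => A.val.map (x - ·)).count g = diffCount A g := by
  have hrow (x : G) : (A.val.map (x - ·)).count g = if x - g ∈ A then 1 else 0 := by
    conv_lhs => rw [← sub_sub_cancel x g]
    rw [Multiset.count_map_eq_count' _ _ (sub_right_injective (b := x)),
      Multiset.count_eq_of_nodup A.nodup]
    rfl
  rw [Multiset.count_bind, diffCount, card_filter, sum_eq_multiset_sum]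
  simp_rw [hrow]

theorem count_msetDiffs_nsmul (A : Finset G) (n : ℕ) (g : G) :
    (msetDiffs (n • A.val)).count g = n ^ 2 * diffCount A g - if g = 0 then n * #A else 0 := by
  have hbind : ((n • A.val).bind fun x => (n • A.val).map (x - ·)).count g
      = n ^ 2 * diffCount A g := by
    rw [← count_bind_map_sub, Multiset.count_bind, Multiset.count_bind, Multiset.map_nsmul,
      Multiset.sum_nsmul]
    simp_rw [Multiset.map_nsmul, Multiset.count_nsmul, Multiset.sum_map_mul_left, smul_eq_mul]
    ring
  rw [msetDiffs, Multiset.count_sub, hbind, Multiset.count_replicate, Multiset.card_nsmul]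
  simp [eq_comm]

end DiffCount

theorem diffCount_mul_left {K : Type*} [DivisionRing K] [DecidableEq K] (A : Finset K) {u : K}
    (hu : u ≠ 0) (hA : ∀ a, u * a ∈ A ↔ a ∈ A) (g : K) :
    diffCount A (u * g) = diffCount A g := by
  have hA' (b : K) : u⁻¹ * b ∈ A ↔ b ∈ A := by
    rw [← hA, mul_inv_cancel_left₀ hu]
  refine (card_nbij' (u * ·) (u⁻¹ * ·) ?_ ?_ ?_ ?_).symm <;> intro a
  · simp_all [← mul_sub]
  · have : u⁻¹ * a - g = u⁻¹ * (a - u * g) := by rw [mul_sub, inv_mul_cancel_left₀ hu]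
    simp_all
  · simp [inv_mul_cancel_left₀ hu]
  · simp [mul_inv_cancel_left₀ hu]

section FiniteField

variable {F : Type*} [Field F] [Fintype F] [DecidableEq F]

variable (F) in
def squares : Finset F := {a | IsSquare a}

theorem isSquare_or_isSquare_neg (hF : ¬IsSquare (-1 : F)) (g : F) :
    IsSquare g ∨ IsSquare (-g) := by
  by_contra! h
  have hmul := map_mul (quadraticChar F) (-1) g
  rw [neg_one_mul, quadraticChar_neg_one_iff_not_isSquare.mpr hF,
    quadraticChar_neg_one_iff_not_isSquare.mpr h.1,
    quadraticChar_neg_one_iff_not_isSquare.mpr h.2] at hmul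
  norm_num at hmul

theorem two_mul_card_squares (hq : Fintype.card F % 2 = 1) :
    2 * #(squares F) = Fintype.card F + 1 := by
  have hF : ringChar F ≠ 2 := fun h => by
    have := FiniteField.even_card_iff_char_two.mp h
    omega
  have hχ (a : F) :
      quadraticChar F a = (if IsSquare a then 1 else -1) - if a = 0 then 1 else 0 := by
    rw [quadraticChar_apply, quadraticCharFun]
    split_ifs <;> simp_all
  have hsum := quadraticChar_sum_zero hF
  simp_rw [hχ, sum_sub_distrib, sum_ite, sum_const] at hsum
  have hsplit := card_filter_add_card_filter_not (s := (univ : Finset F)) (fun a : F => IsSquare a)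
  simp only [nsmul_eq_mul, mul_one, mul_neg, mul_zero, add_zero, filter_eq', mem_univ,
    if_true, card_singleton, Nat.cast_one] at hsum
  rw [card_univ] at hsplit
  rw [squares]
  omega

theorem diffCount_squares_eq_diffCount_one (hF : ¬IsSquare (-1 : F)) {g : F} (hg : g ≠ 0) :
    diffCount (squares F) g = diffCount (squares F) 1 := by
  have hsq {u : F} (hu : u ≠ 0) (hu_sq : IsSquare u) :
      diffCount (squares F) u = diffCount (squares F) 1 := by
    have hinv (a : F) : u * a ∈ squares F ↔ a ∈ squares F := by
      simp only [squares, mem_filter_univ]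
      refine ⟨fun h => ?_, hu_sq.mul⟩
      simpa [inv_mul_cancel_left₀ hu] using (isSquare_inv.mpr hu_sq).mul h
    simpa using diffCount_mul_left (squares F) hu hinv 1
  rcases isSquare_or_isSquare_neg hF g with h | h
  · exact hsq hg h
  · rw [← diffCount_neg, hsq (neg_ne_zero.mpr hg) h]

theorem four_mul_diffCount_squares (hq : Fintype.card F % 4 = 3) {g : F} (hg : g ≠ 0) :
    4 * diffCount (squares F) g = Fintype.card F + 1 := by
  have hneg : ¬IsSquare (-1 : F) := by
    rw [FiniteField.isSquare_neg_one_iff]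
    omega
  have hS := two_mul_card_squares (F := F) (by omega)
  have htotal := sum_diffCount (squares F)
  rw [← add_sum_erase _ _ (mem_univ 0), diffCount_zero,
    sum_congr rfl fun x hx => diffCount_squares_eq_diffCount_one hneg (ne_of_mem_erase hx),
    sum_const, card_erase_of_mem (mem_univ 0), card_univ, smul_eq_mul] at htotal
  rw [diffCount_squares_eq_diffCount_one hneg hg]
  obtain ⟨k, hk⟩ : ∃ k, Fintype.card F = 4 * k + 3 := ⟨Fintype.card F / 4, by omega⟩
  have hS' : #(squares F) = 2 * k + 2 := by omega
  rw [hk, hS', show 4 * k + 3 - 1 = 2 * (2 * k + 1) by omega] at htotal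
  have hd : (2 * k + 1) * diffCount (squares F) 1 = (2 * k + 1) * (k + 1) := by nlinarith
  rw [hk, Nat.eq_of_mul_eq_mul_left (by omega) hd]
  ring

end FiniteField

/-- Paley difference multiset of the second type: for a prime power `p ≡ 3 (mod 4)`
(a finite field `F` with `|F| ≡ 3 (mod 4)`), the multiset `2·({0} ∪ F□)` consisting of
`0` and each nonzero square all taken with multiplicity `2` is an `(F_p, p+1, p+1)`
strong difference family: it has size `p+1` and every element of `F_p` occurs exactly
`p+1` times among the differences of its distinct positions. -/
theorem paper_stmt_4 {F : Type*} [Field F] [Fintype F] [DecidableEq F]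
    (hp : Fintype.card F % 4 = 3) :
    let M : Multiset F :=
      2 • ((0 : F) ::ₘ (Finset.univ.filter fun x : F => x ≠ 0 ∧ IsSquare x).val)
    Multiset.card M = Fintype.card F + 1 ∧
      ∀ g : F, Multiset.count g (msetDiffs M) = Fintype.card F + 1 := by
  intro M
  have hM : M = 2 • (squares F).val := by
    change 2 • _ = 2 • _
    rw [← insert_val_of_notMem (by simp)]
    congr 2
    ext x
    by_cases hx : x = 0 <;> simp [squares, hx]
  have hS := two_mul_card_squares (F := F) (by omega)
  refine ⟨by rw [hM, Multiset.card_nsmul, card_val, hS], fun g => ?_⟩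
  rw [hM, count_msetDiffs_nsmul]
  rcases eq_or_ne g 0 with rfl | hg
  · rw [diffCount_zero, if_pos rfl]
    omega
  · rw [if_neg hg, Nat.sub_zero, ← four_mul_diffCount_squares hp hg]
    norm_num
end

section
/- The family of three multisets $F_1=[0,3,3,8,8,17,17,23,23]$, $F_2=[0,1,2,3,19,4,5,8,12]$, $F_3=[0,1,2,3,19,6,11,13,17]$ over $\mathbb{Z}_{27}$ is a $(\mathbb{Z}_{27},9,8)$ strong difference family: every element of $\mathbb{Z}_{27}$ occurs exactly $8$ times among the differences of distinct positions of the $F_i$. -/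
open scoped Classical

/-- The multiset of differences `f a - f b` over all ordered pairs `(a,b)` of distinct
positions of the block represented by the tuple `f`. -/
def blockDiffs {G : Type*} [AddCommGroup G] {k : ℕ} (f : Fin k → G) : Multiset G :=
  (Finset.univ.offDiag : Finset (Fin k × Fin k)).val.map fun p => f p.1 - f p.2

open Finset

theorem count_blockDiffs {G : Type*} [AddCommGroup G] [DecidableEq G] {k : ℕ} (f : Fin k → G)
    (g : G) : (blockDiffs f).count g = #{p ∈ univ.offDiag | f p.1 - f p.2 = g} := by
  rw [blockDiffs, Multiset.count_map, card_def, filter_val]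
  congr 1
  exact Multiset.filter_congr fun _ _ => eq_comm

/-- The three multisets `F₁ = [0,3,3,8,8,17,17,23,23]`, `F₂ = [0,1,2,3,19,4,5,8,12]`,
`F₃ = [0,1,2,3,19,6,11,13,17]` over `ℤ₂₇` form a `(ℤ₂₇, 9, 8)` strong difference family:
every element of `ℤ₂₇` occurs exactly `8` times among the differences of distinct
positions of the `Fᵢ`. -/
theorem paper_stmt_6 :
    let F₁ : Fin 9 → ZMod 27 := ![0, 3, 3, 8, 8, 17, 17, 23, 23]
    let F₂ : Fin 9 → ZMod 27 := ![0, 1, 2, 3, 19, 4, 5, 8, 12]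
    let F₃ : Fin 9 → ZMod 27 := ![0, 1, 2, 3, 19, 6, 11, 13, 17]
    ∀ g : ZMod 27,
      Multiset.count g (blockDiffs F₁ + blockDiffs F₂ + blockDiffs F₃) = 8 := by
  intro F₁ F₂ F₃
  simp only [Multiset.count_add, count_blockDiffs]
  decide
end

section
/- If there exist a $(G,N,k,\lambda)$ relative difference family and a $2$-$(|N|+1,k,\lambda)$ design, then there exists a $2$-$(|G|+1,k,\lambda)$ design. -/
/-!
Realise `G ∪ {∞}` as `Option G`, with `∞ = none`. Translating the base blocks by every element of
`G` covers a pair `{u, v} ⊆ G` exactly as often as `u - v` occurs as a difference in the family,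
that is `λ` times when `u - v ∉ N` and never otherwise. The pairs still missing, those inside a
coset `a + N` and those containing `∞`, are covered `λ` times each by placing a copy of the small
design on every `(a + N) ∪ {∞}`.
-/

open scoped Classical

def finsetDiffs {G : Type*} [AddCommGroup G] [DecidableEq G] (B : Finset G) : Multiset G :=
  B.offDiag.val.map fun p => p.1 - p.2

def Is2Design {V : Type*} [Fintype V] [DecidableEq V]
    (𝒜 : Multiset (Finset V)) (k lam : ℕ) : Prop :=
  (∀ b ∈ 𝒜, b.card = k) ∧
    ∀ x y : V, x ≠ y → Multiset.countP (fun b => x ∈ b ∧ y ∈ b) 𝒜 = lam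

open Finset Pointwise

section PairCount

variable {V W : Type*}

def pairCount [DecidableEq V] (𝒜 : Multiset (Finset V)) (x y : V) : ℕ :=
  𝒜.countP fun b => x ∈ b ∧ y ∈ b

lemma pairCount_comm [DecidableEq V] (𝒜 : Multiset (Finset V)) (x y : V) :
    pairCount 𝒜 x y = pairCount 𝒜 y x := by
  simp only [pairCount, and_comm]

lemma pairCount_add [DecidableEq V] (𝒜 ℬ : Multiset (Finset V)) (x y : V) :
    pairCount (𝒜 + ℬ) x y = pairCount 𝒜 x y + pairCount ℬ x y :=
  Multiset.countP_add _ _ _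

lemma pairCount_sum [DecidableEq V] {ι : Type*} (s : Finset ι) (𝒜 : ι → Multiset (Finset V))
    (x y : V) :
    pairCount (∑ i ∈ s, 𝒜 i) x y = ∑ i ∈ s, pairCount (𝒜 i) x y :=
  map_sum (Multiset.countPAddMonoidHom _) _ _

lemma pairCount_map_embedding [DecidableEq V] [DecidableEq W] (f : V ↪ W)
    (𝒜 : Multiset (Finset V)) (x y : V) :
    pairCount (𝒜.map (·.map f)) (f x) (f y) = pairCount 𝒜 x y := by
  rw [pairCount, pairCount, Multiset.countP_map, Multiset.countP_eq_card_filter]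
  simp only [Finset.mem_map' f]

lemma pairCount_map_embedding_eq_zero [DecidableEq W] (f : V ↪ W) (𝒜 : Multiset (Finset V))
    {z : W} (hz : z ∉ Set.range f) (y : W) : pairCount (𝒜.map (·.map f)) z y = 0 := by
  refine Multiset.countP_eq_zero.mpr fun b hb ⟨hzb, _⟩ => hz ?_
  obtain ⟨c, -, rfl⟩ := Multiset.mem_map.mp hb
  obtain ⟨x, -, rfl⟩ := Finset.mem_map.mp hzb
  exact ⟨x, rfl⟩

lemma card_of_mem_map_embedding (f : V ↪ W) {𝒜 : Multiset (Finset V)} {k : ℕ}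
    (h𝒜 : ∀ b ∈ 𝒜, b.card = k) : ∀ b ∈ 𝒜.map (·.map f), b.card = k := by
  simp only [Multiset.mem_map]
  rintro _ ⟨b, hb, rfl⟩
  rw [card_map, h𝒜 b hb]

variable [Fintype V] [DecidableEq V] [DecidableEq W] {𝒜 : Multiset (Finset V)} {k lam : ℕ}

lemma is2Design_iff :
    Is2Design 𝒜 k lam ↔ (∀ b ∈ 𝒜, b.card = k) ∧ ∀ x y, x ≠ y → pairCount 𝒜 x y = lam :=
  Iff.rfl

lemma Is2Design.pairCount_map_of_mem_range (h : Is2Design 𝒜 k lam) (f : V ↪ W) {x y : W}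
    (hx : x ∈ Set.range f) (hy : y ∈ Set.range f) (hxy : x ≠ y) :
    pairCount (𝒜.map (·.map f)) x y = lam := by
  obtain ⟨x, rfl⟩ := hx
  obtain ⟨y, rfl⟩ := hy
  rw [pairCount_map_embedding]
  exact h.2 x y (ne_of_apply_ne f hxy)

lemma Is2Design.map_equiv [Fintype W] (h : Is2Design 𝒜 k lam) (e : V ≃ W) :
    Is2Design (𝒜.map (·.map e.toEmbedding)) k lam :=
  ⟨card_of_mem_map_embedding _ h.1, fun _ _ hxy =>
    h.pairCount_map_of_mem_range _ (e.surjective _) (e.surjective _) hxy⟩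

end PairCount

section Development

variable {G : Type*} [AddCommGroup G] [Fintype G] [DecidableEq G]

lemma pairCount_translates (B : Finset G) {u v : G} (huv : u ≠ v) :
    pairCount ((univ : Finset G).val.map (· +ᵥ B)) u v = (finsetDiffs B).count (u - v) := by
  rw [pairCount, Multiset.countP_map, finsetDiffs, Multiset.count_map, ← Finset.filter_val,
    ← Finset.filter_val, Finset.card_val, Finset.card_val]
  refine card_nbij' (fun g => (-g + u, -g + v)) (fun p => u - p.1) ?_ ?_ ?_ ?_
  · intro g
    simp only [coe_filter, mem_univ, true_and, Set.mem_ofPred_eq, ← neg_vadd_mem_iff, vadd_eq_add,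
      mem_offDiag]
    grind
  · rintro ⟨a, b⟩ hab
    simp only [coe_filter, mem_univ, true_and, Set.mem_ofPred_eq, ← neg_vadd_mem_iff, vadd_eq_add,
      mem_offDiag, neg_sub, sub_add_cancel] at hab ⊢
    obtain ⟨⟨ha, hb, -⟩, hdiff⟩ := hab
    have hb' : a - u + v = b := by grind
    exact ⟨ha, hb' ▸ hb⟩
  · intro g _
    simp
  · rintro ⟨a, b⟩
    simp only [coe_filter, Set.mem_ofPred_eq, Prod.mk.injEq]
    grind

def development {ι : Type*} [Fintype ι] (B : ι → Finset G) : Multiset (Finset G) :=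
  ∑ i, (univ : Finset G).val.map (· +ᵥ B i)

lemma pairCount_development {ι : Type*} [Fintype ι] (B : ι → Finset G) {u v : G}
    (huv : u ≠ v) :
    pairCount (development B) u v = (∑ i, finsetDiffs (B i)).count (u - v) := by
  simp only [development, pairCount_sum, Multiset.count_sum', pairCount_translates _ huv]

lemma card_of_mem_development {ι : Type*} [Fintype ι] {B : ι → Finset G} {k : ℕ}
    (hcard : ∀ i, (B i).card = k) : ∀ b ∈ development B, b.card = k := by
  simp only [development, Multiset.mem_sum, mem_univ, true_and, Multiset.mem_map]
  rintro _ ⟨i, g, -, rfl⟩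
  rw [card_vadd_finset, hcard i]

end Development

section Cosets

variable {G : Type*} [AddCommGroup G] (N : AddSubgroup G)

def cosetEmbedding (a : G) : Option N ↪ Option G :=
  ((Function.Embedding.subtype (· ∈ N)).trans (addLeftEmbedding a)).optionMap

lemma some_mem_range_cosetEmbedding {a u : G} :
    some u ∈ Set.range (cosetEmbedding N a) ↔ (a : G ⧸ N) = u := by
  rw [QuotientAddGroup.eq]
  constructor
  · rintro ⟨_ | n, h⟩
    · cases h
    · simp only [cosetEmbedding, Function.Embedding.optionMap_apply, Option.map_some,
        Option.some.injEq] at h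
      simp [← h]
  · intro h
    exact ⟨some ⟨-a + u, h⟩, by simp [cosetEmbedding]⟩

lemma none_mem_range_cosetEmbedding (a : G) : none ∈ Set.range (cosetEmbedding N a) :=
  ⟨none, rfl⟩

variable [Fintype G] [DecidableEq G]

noncomputable def cosetBlocks (𝒜 : Multiset (Finset (Option N))) :
    Multiset (Finset (Option G)) :=
  ∑ q : G ⧸ N, 𝒜.map (·.map (cosetEmbedding N q.out))

lemma pairCount_cosetBlocks (𝒜 : Multiset (Finset (Option N))) (u : G) (y : Option G) :
    pairCount (cosetBlocks N 𝒜) (some u) y =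
      pairCount (𝒜.map (·.map (cosetEmbedding N (u : G ⧸ N).out))) (some u) y := by
  rw [cosetBlocks, pairCount_sum, Finset.sum_eq_single (u : G ⧸ N)]
  · intro q _ hq
    refine pairCount_map_embedding_eq_zero _ _ ?_ _
    rw [some_mem_range_cosetEmbedding, QuotientAddGroup.out_eq']
    exact hq
  · simp

variable {N} {𝒜 : Multiset (Finset (Option N))} {k lam : ℕ}

lemma Is2Design.pairCount_cosetBlocks_some_none (h : Is2Design 𝒜 k lam) (u : G) :
    pairCount (cosetBlocks N 𝒜) (some u) none = lam := by
  rw [pairCount_cosetBlocks]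
  refine h.pairCount_map_of_mem_range _ ?_ (none_mem_range_cosetEmbedding N _) (by simp)
  rw [some_mem_range_cosetEmbedding, QuotientAddGroup.out_eq']

lemma Is2Design.pairCount_cosetBlocks_some_some (h : Is2Design 𝒜 k lam) {u v : G}
    (huv : u ≠ v) :
    pairCount (cosetBlocks N 𝒜) (some u) (some v) = if u - v ∈ N then lam else 0 := by
  have hu : some u ∈ Set.range (cosetEmbedding N (u : G ⧸ N).out) := by
    rw [some_mem_range_cosetEmbedding, QuotientAddGroup.out_eq']
  have hv : some v ∈ Set.range (cosetEmbedding N (u : G ⧸ N).out) ↔ u - v ∈ N := by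
    rw [some_mem_range_cosetEmbedding, QuotientAddGroup.out_eq', QuotientAddGroup.eq_iff_sub_mem]
  rw [pairCount_cosetBlocks]
  split_ifs with huvN
  · exact h.pairCount_map_of_mem_range _ hu (hv.mpr huvN) (by simpa using huv)
  · rw [pairCount_comm]
    exact pairCount_map_embedding_eq_zero _ _ (hv.not.mpr huvN) _

end Cosets

noncomputable def extendedDesign {G ι : Type*} [AddCommGroup G] [Fintype G] [DecidableEq G]
    [Fintype ι] (N : AddSubgroup G) (B : ι → Finset G) (𝒜 : Multiset (Finset (Option N))) :
    Multiset (Finset (Option G)) :=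
  (development B).map (·.map Function.Embedding.some) + cosetBlocks N 𝒜

theorem is2Design_extendedDesign {G ι : Type*} [AddCommGroup G] [Fintype G] [DecidableEq G]
    [Fintype ι] {N : AddSubgroup G} {B : ι → Finset G} {𝒜 : Multiset (Finset (Option N))}
    {k lam : ℕ} (h𝒜 : Is2Design 𝒜 k lam) (hcard : ∀ i, (B i).card = k)
    (hDF : ∀ g : G, Multiset.count g (∑ i, finsetDiffs (B i)) = if g ∈ N then 0 else lam) :
    Is2Design (extendedDesign N B 𝒜) k lam := by
  have hdev_none (y : Option G) :
      pairCount ((development B).map (·.map Function.Embedding.some)) none y = 0 :=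
    pairCount_map_embedding_eq_zero _ _ (fun ⟨x, hx⟩ => Option.some_ne_none x hx) _
  have hdev_some (u v : G) :
      pairCount ((development B).map (·.map Function.Embedding.some)) (some u) (some v) =
        pairCount (development B) u v :=
    pairCount_map_embedding _ _ u v
  refine is2Design_iff.mpr ⟨?_, ?_⟩
  · simp only [extendedDesign, cosetBlocks, Multiset.mem_add, Multiset.mem_sum, mem_univ, true_and]
    rintro b (hb | ⟨q, hb⟩)
    · exact card_of_mem_map_embedding _ (card_of_mem_development hcard) b hb
    · exact card_of_mem_map_embedding _ h𝒜.1 b hb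
  · rintro (_ | u) (_ | v) hxy
    · exact absurd rfl hxy
    · rw [extendedDesign, pairCount_add, hdev_none, pairCount_comm,
        h𝒜.pairCount_cosetBlocks_some_none, zero_add]
    · rw [extendedDesign, pairCount_add, pairCount_comm, hdev_none,
        h𝒜.pairCount_cosetBlocks_some_none, zero_add]
    · have huv : u ≠ v := Option.some_injective _ |>.ne_iff.mp hxy
      rw [extendedDesign, pairCount_add, h𝒜.pairCount_cosetBlocks_some_some huv, hdev_some,
        pairCount_development B huv, hDF]
      split_ifs <;> simp

/-- If there exist a `(G,N,k,λ)` relative difference family and a `2-(|N|+1,k,λ)` design,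
then there exists a `2-(|G|+1,k,λ)` design. -/
theorem paper_stmt_11 {G : Type*} [AddCommGroup G] [Fintype G] [DecidableEq G]
    (N : AddSubgroup G) {r k lam : ℕ}
    (B : Fin r → Finset G) (hcard : ∀ i, (B i).card = k)
    (hDF : ∀ g : G, Multiset.count g (∑ i, finsetDiffs (B i)) = if g ∈ N then 0 else lam)
    (hsmall : ∃ 𝒜 : Multiset (Finset (Fin (Nat.card N + 1))), Is2Design 𝒜 k lam) :
    ∃ 𝒜 : Multiset (Finset (Fin (Fintype.card G + 1))), Is2Design 𝒜 k lam := by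
  obtain ⟨𝒜, h𝒜⟩ := hsmall
  let toOptionN : Fin (Nat.card N + 1) ≃ Option N :=
    (finSuccEquiv _).trans (Equiv.optionCongr (Finite.equivFin N).symm)
  let ofOptionG : Option G ≃ Fin (Fintype.card G + 1) :=
    (Equiv.optionCongr (Fintype.equivFin G)).trans (finSuccEquiv _).symm
  exact ⟨_,
    (is2Design_extendedDesign (h𝒜.map_equiv toOptionN) hcard hDF).map_equiv ofOptionG⟩
end

section
/- Let $p \equiv 1 \pmod 4$ be a prime power, $\delta$ a generator of the group of nonzero squares of $\mathbb{F}_p$, and consider the first-type Paley difference multiset written as the sequence $(0, \delta, \delta, -\delta, -\delta, \delta^2, \delta^2, -\delta^2, -\delta^2, \ldots, \delta^{(p-1)/4}, \delta^{(p-1)/4}, -\delta^{(p-1)/4}, -\delta^{(p-1)/4})$. Then for each nonzero $h \in \mathbb{F}_p$, the multiset of symbolic second-coordinate differences $T_h$ (arising when the second coordinates are $(0, y_1,-y_1, \xi y_1, -\xi y_1, \ldots, y_{(p-1)/4}, -y_{(p-1)/4}, \xi y_{(p-1)/4}, -\xi y_{(p-1)/4})$ with $\xi$ a primitive $4$th root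 of unity) has the form $\{1,-1,\xi,-\xi\} \cdot D_h$ for a multiset $D_h$ of size $(p-1)/4$, and $D_h = D_{-h}$. -/
/-!
The position map `π = paley1rot` cycling each block `(δⁱ, δⁱ, -δⁱ, -δⁱ)` as
`0 → 2 → 1 → 3 → 0` negates the first coordinates and multiplies the second ones by `ξ`.
So `(a, b) ↦ (π b, π a)` preserves `f a - f b = h` and multiplies `φ a - φ b` by `-ξ`; it has
order 4, and since `π²` fixes only the position of `0`, all its orbits on pairs `a ≠ b` have
length 4. Splitting `T_h` into these orbits gives `T_h = {1, -1, ξ, -ξ} · D_h`.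

Because `δ ^ ((p-1)/4) = -1` and `-1` is a square, the first coordinates are `ψ a ^ 2` for a
bijection `ψ` onto `𝔽_p` (namely `ψ = paley1snd t r` with `t² = -1`, `r_i² = δ^(i+1)`), so
`|T_h|` is the number `p - 1` of solutions of `u² - v² = h`. Finally `T_{-h} = -T_h` by swapping
the pair, and `{1, -1, ξ, -ξ} · D_h` is invariant under negation.
-/

open scoped Classical

/-- The multiset `[φ a - φ b : f a - f b = h, a ≠ b]` of second-coordinate differences
taken over ordered pairs of distinct positions whose first-coordinate difference is `h`. -/
def Tdiff {ι Fp Fq : Type*} [Fintype ι] [DecidableEq ι] [AddCommGroup Fp] [DecidableEq Fp]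
    [AddCommGroup Fq] (f : ι → Fp) (φ : ι → Fq) (h : Fp) : Multiset Fq :=
  ((Finset.univ.offDiag : Finset (ι × ι)).filter fun p => f p.1 - f p.2 = h).val.map
    fun p => φ p.1 - φ p.2

/-- The first-type Paley sequence
`(0, δ, δ, -δ, -δ, δ², δ², -δ², -δ², …, δ^m, δ^m, -δ^m, -δ^m)` where `m = (p-1)/4`:
position `none` carries `0`, and position `(i,t)` carries `±δ^(i+1)`. -/
def paley1fst {Fp : Type*} [Field Fp] (δ : Fp) (m : ℕ) : Option (Fin m × Fin 4) → Fp
  | none => 0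
  | some (i, t) => (if (t : ℕ) < 2 then 1 else -1) * δ ^ ((i : ℕ) + 1)

/-- The corresponding second coordinates
`(0, y₁, -y₁, ξy₁, -ξy₁, …, y_m, -y_m, ξy_m, -ξy_m)`. -/
def paley1snd {Fq : Type*} [Field Fq] (ξ : Fq) {m : ℕ} (y : Fin m → Fq) :
    Option (Fin m × Fin 4) → Fq
  | none => 0
  | some (i, t) =>
      (if (t : ℕ) % 2 = 0 then 1 else -1) * (if (t : ℕ) < 2 then 1 else ξ) * y i

open Function

section PeriodicOrbits

variable {α R : Type*} [Monoid R] {σ : α → α}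

lemma apply_iterate_eq_pow_mul {s : Set α} {g : α → R} {c : R} (hS : Set.MapsTo σ s s)
    (hg : ∀ a ∈ s, g (σ a) = c * g a) {a : α} (ha : a ∈ s) (k : ℕ) :
    g (σ^[k] a) = c ^ k * g a := by
  induction k with
  | zero => simp
  | succ k ih => rw [iterate_succ_apply', hg _ (hS.iterate k ha), ih, pow_succ', mul_assoc]

theorem Finset.exists_map_eq_bind_of_minimalPeriod_eq [DecidableEq α] {S : Finset α} {n : ℕ}
    (hn : 0 < n) (hS : Set.MapsTo σ S S) (hper : ∀ a ∈ S, minimalPeriod σ a = n) {g : α → R}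
    {c : R} (hg : ∀ a ∈ S, g (σ a) = c * g a) :
    ∃ D : Multiset R,
      S.val.map g = ((Multiset.range n).map (c ^ ·)).bind fun e => D.map (e * ·) := by
  induction S using Finset.strongInduction with
  | H S ih =>
  obtain rfl | ⟨a, ha⟩ := S.eq_empty_or_nonempty
  · exact ⟨0, by simp⟩
  set O := (Finset.range n).image (σ^[·] a) with hO
  have haO : a ∈ O := Finset.mem_image.2 ⟨0, Finset.mem_range.2 hn, rfl⟩
  have hOS : O ⊆ S := Finset.image_subset_iff.2 fun k _ => hS.iterate k ha
  have hOg : O.val.map g = (Multiset.range n).map fun k => c ^ k * g a := by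
    have hinj : Set.InjOn (σ^[·] a) (Finset.range n) := by
      rw [Finset.coe_range, ← hper a ha]; exact iterate_injOn_Iio_minimalPeriod
    rw [hO, Finset.image_val_of_injOn hinj, Multiset.map_map]
    exact Multiset.map_congr rfl fun k _ => apply_iterate_eq_pow_mul hS hg ha k
  -- if `σ b ∈ O` then `b = σ^[n - 1] (σ b) ∈ O`, so `σ` maps `S \ O` into itself
  have hrest : Set.MapsTo σ ↑(S \ O) ↑(S \ O) := by
    intro b hb
    rw [Finset.mem_coe, Finset.mem_sdiff] at hb ⊢
    refine ⟨hS hb.1, fun hσb => hb.2 ?_⟩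
    obtain ⟨k, -, hk⟩ := Finset.mem_image.1 hσb
    have hb' : σ^[(n - 1 + k) % n] a = b := by
      rw [← hper a ha, iterate_mod_minimalPeriod_eq, iterate_add_apply, hk, hper a ha,
        ← iterate_succ_apply, Nat.succ_eq_add_one, Nat.sub_add_cancel hn, ← hper b hb.1,
        iterate_minimalPeriod]
    exact Finset.mem_image.2 ⟨_, Finset.mem_range.2 (Nat.mod_lt _ hn), hb'⟩
  obtain ⟨D, hD⟩ := ih (S \ O) (Finset.sdiff_ssubset hOS ⟨a, haO⟩) hrest
    (fun b hb => hper b (Finset.mem_sdiff.1 hb).1) (fun b hb => hg b (Finset.mem_sdiff.1 hb).1)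
  refine ⟨g a ::ₘ D, ?_⟩
  have hSO : S.val = O.val + (S \ O).val := by
    rw [Finset.sdiff_val, add_tsub_cancel_of_le (Finset.val_le_iff.2 hOS)]
  simp only [hSO, Multiset.map_add, hOg, hD, Multiset.map_cons, Multiset.bind_cons,
    Multiset.map_map, comp_def]

end PeriodicOrbits

lemma Multiset.map_neg_bind_mul {R : Type*} [Ring R] {M : Multiset R} (hM : M.map Neg.neg = M)
    (D : Multiset R) :
    (M.bind fun c => D.map (c * ·)).map Neg.neg = M.bind fun c => D.map (c * ·) := by
  conv_rhs => rw [← hM]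
  simp only [Multiset.map_bind, Multiset.bind_map, Multiset.map_map, comp_def, neg_mul]

section Tdiff

variable {ι Fp Fq : Type*} [Fintype ι] [DecidableEq ι] [AddCommGroup Fp] [DecidableEq Fp]

lemma Tdiff_neg [AddCommGroup Fq] (f : ι → Fp) (φ : ι → Fq) (h : Fp) :
    Tdiff f φ (-h) = (Tdiff f φ h).map Neg.neg := by
  have hswap : ((Finset.univ.offDiag : Finset (ι × ι)).filter fun p => f p.1 - f p.2 = h).map
      (Equiv.prodComm ι ι).toEmbedding =
      (Finset.univ.offDiag : Finset (ι × ι)).filter fun p => f p.1 - f p.2 = -h := by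
    ext ⟨a, b⟩
    simp only [Finset.mem_map_equiv, Finset.mem_filter, Finset.mem_offDiag, Finset.mem_univ,
      true_and, Equiv.prodComm_symm, Equiv.prodComm_apply, Prod.fst_swap, Prod.snd_swap]
    rw [ne_comm, ← neg_sub, neg_eq_iff_eq_neg]
  rw [Tdiff, Tdiff, ← hswap, Finset.map_val, Multiset.map_map, Multiset.map_map]
  exact Multiset.map_congr rfl fun p _ => (neg_sub _ _).symm

theorem Tdiff_eq_bind_of_rotation [CommRing Fq] {f : ι → Fp} {φ : ι → Fq} {π : ι → ι} {c : Fq}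
    (hf : ∀ a, f (π a) = -f a) (hφ : ∀ a, φ (π a) = c * φ a) (hπ4 : ∀ a, π^[4] a = a)
    (hπ2 : ∀ a b, π^[2] a = a → π^[2] b = b → a = b) (h : Fp) :
    ∃ D : Multiset Fq, Tdiff f φ h =
      ((Multiset.range 4).map ((-c) ^ ·)).bind fun e => D.map (e * ·) := by
  have hπ : Injective π := fun a b hab => by
    simpa only [← iterate_succ_apply, hπ4] using congrArg π^[3] hab
  set σ : ι × ι → ι × ι := fun p => (π p.2, π p.1)
  have hσ2 : ∀ p, σ^[2] p = (π^[2] p.1, π^[2] p.2) := fun p => rfl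
  rw [Tdiff]
  refine Finset.exists_map_eq_bind_of_minimalPeriod_eq (σ := σ) (g := fun p => φ p.1 - φ p.2)
    (by norm_num) ?_ ?_ ?_
  · intro p hp
    simp only [Finset.coe_filter, Finset.mem_offDiag, Finset.mem_univ, true_and,
      Set.mem_ofPred_eq] at hp ⊢
    exact ⟨fun hπp => hp.1 (hπ hπp).symm, by rw [hf, hf, neg_sub_neg, hp.2]⟩
  · intro p hp
    refine minimalPeriod_eq_prime_pow (p := 2) (k := 1) (fun hp2 => ?_) ?_
    · simp only [Finset.mem_filter, Finset.mem_offDiag] at hp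
      have := hp2.eq
      rw [pow_one, hσ2, Prod.ext_iff] at this
      exact hp.1.2.2 (hπ2 _ _ this.1 this.2)
    · change σ^[2 + 2] p = p
      rw [iterate_add_apply, hσ2, hσ2]
      exact Prod.ext (hπ4 p.1) (hπ4 p.2)
  · intro p _
    simp only [σ, hφ]; ring

end Tdiff

section Counting

variable {F : Type*} [Field F] [Fintype F] [DecidableEq F]

/-- The solutions `(u, v)` correspond to the units `w = u + v`, since then `u - v = h / w`. -/
lemma card_filter_sq_sub_sq_eq (h2 : (2 : F) ≠ 0) {h : F} (hh : h ≠ 0) :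
    (Finset.univ.filter fun q : F × F => q.1 ^ 2 - q.2 ^ 2 = h).card = Fintype.card F - 1 := by
  rw [← Finset.card_univ, ← Finset.card_erase_of_mem (Finset.mem_univ (0 : F))]
  have hsum : ∀ q : F × F, q.1 ^ 2 - q.2 ^ 2 = h → q.1 + q.2 ≠ 0 := fun q hq h0 =>
    hh (by rw [← hq]; linear_combination (q.1 - q.2) * h0)
  refine Finset.card_nbij' (fun q => q.1 + q.2) (fun w => ((w + h / w) / 2, (w - h / w) / 2))
    ?_ ?_ ?_ ?_
  · intro q hq
    simp only [Finset.coe_filter, Finset.mem_univ, true_and, Set.mem_ofPred_eq] at hq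
    simpa using hsum q hq
  · intro w hw
    simp only [Finset.coe_erase, Finset.coe_univ, Set.mem_sdiff, Set.mem_univ,
      Set.mem_singleton_iff, true_and] at hw
    simp only [Finset.coe_filter, Finset.mem_univ, true_and, Set.mem_ofPred_eq]
    field_simp
    ring
  · intro q hq
    simp only [Finset.coe_filter, Finset.mem_univ, true_and, Set.mem_ofPred_eq] at hq
    have hq0 := hsum q hq
    ext
    · field_simp
      linear_combination -hq
    · field_simp
      linear_combination hq
  · intro w _
    simp only
    rw [← add_div, add_add_sub_cancel, ← two_mul, mul_div_cancel_left₀ _ h2]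

end Counting

lemma card_Tdiff_of_eq_sq {ι F Fq : Type*} [Fintype ι] [DecidableEq ι] [Field F] [Fintype F]
    [DecidableEq F] [AddCommGroup Fq] {f : ι → F} (φ : ι → Fq) (ψ : ι ≃ F)
    (hψ : ∀ a, f a = ψ a ^ 2) (h2 : (2 : F) ≠ 0) {h : F} (hh : h ≠ 0) :
    Multiset.card (Tdiff f φ h) = Fintype.card F - 1 := by
  rw [Tdiff, Multiset.card_map, Finset.card_val, ← card_filter_sq_sub_sq_eq h2 hh]
  refine Finset.card_equiv (ψ.prodCongr ψ) fun p => ?_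
  simp only [Finset.mem_filter, Finset.mem_offDiag, Finset.mem_univ, true_and,
    Equiv.prodCongr_apply, Prod.map_fst, Prod.map_snd, hψ]
  refine ⟨And.right, fun hp => ⟨fun hp12 => hh ?_, hp⟩⟩
  rw [← hp, hp12, sub_self]

def paley1rot (m : ℕ) : Option (Fin m × Fin 4) → Option (Fin m × Fin 4) :=
  Option.map (Prod.map id ![2, 3, 1, 0])

section Paley

variable {m : ℕ}

lemma paley1fst_rot {Fp : Type*} [Field Fp] (δ : Fp) (a : Option (Fin m × Fin 4)) :
    paley1fst δ m (paley1rot m a) = -paley1fst δ m a := by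
  rcases a with _ | ⟨i, t⟩
  · simp [paley1rot, paley1fst]
  · fin_cases t <;> simp [paley1rot, paley1fst]

lemma paley1snd_rot {Fq : Type*} [Field Fq] {ξ : Fq} (hξ : ξ ^ 2 = -1) (y : Fin m → Fq)
    (a : Option (Fin m × Fin 4)) :
    paley1snd ξ y (paley1rot m a) = ξ * paley1snd ξ y a := by
  rcases a with _ | ⟨i, t⟩
  · simp [paley1rot, paley1snd]
  · fin_cases t <;> simp [paley1rot, paley1snd, ← mul_assoc, ← sq, hξ]

lemma paley1rot_iterate_four (a : Option (Fin m × Fin 4)) : (paley1rot m)^[4] a = a := by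
  rcases a with _ | ⟨i, t⟩
  · rfl
  · fin_cases t <;> rfl

lemma eq_none_of_paley1rot_iterate_two {a : Option (Fin m × Fin 4)}
    (ha : (paley1rot m)^[2] a = a) : a = none := by
  rcases a with _ | ⟨i, t⟩
  · rfl
  · fin_cases t <;> simp [paley1rot] at ha

lemma paley1snd_sq {F : Type*} [Field F] {δ t : F} (ht : t ^ 2 = -1) {r : Fin m → F}
    (hr : ∀ i, r i ^ 2 = δ ^ ((i : ℕ) + 1)) (a : Option (Fin m × Fin 4)) :
    paley1snd t r a ^ 2 = paley1fst δ m a := by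
  rcases a with _ | ⟨i, k⟩
  · simp [paley1snd, paley1fst]
  · fin_cases k <;> simp [paley1snd, paley1fst, mul_pow, ht, hr]

end Paley

section GeneratorOfSquares

variable {F : Type*} [Field F] [Fintype F] {m : ℕ} {δ : F}

lemma ringChar_ne_two_of_card_eq (hm : Fintype.card F = 4 * m + 1) : ringChar F ≠ 2 :=
  fun h => by have := FiniteField.even_card_iff_char_two.1 h; omega

/-- If `δ ^ m = 1`, Euler's criterion would make every nonzero `a` a square,
because `a ^ 2` is a power of `δ`. -/
lemma pow_eq_neg_one_of_generates_squares (hm : Fintype.card F = 4 * m + 1)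
    (hδ : ∀ x : F, (x ≠ 0 ∧ IsSquare x) ↔ ∃ i : ℕ, δ ^ i = x) : δ ^ m = -1 := by
  have hF := ringChar_ne_two_of_card_eq hm
  have hhalf : Fintype.card F / 2 = 2 * m := by omega
  obtain ⟨hδ0, s, hs⟩ := (hδ δ).2 ⟨1, pow_one δ⟩
  have hs0 : s ≠ 0 := by rintro rfl; exact hδ0 (by rw [hs, mul_zero])
  have hδm : δ ^ m = s ^ (Fintype.card F / 2) := by rw [hhalf, hs, ← sq, ← pow_mul]
  rw [hδm]
  refine (FiniteField.pow_dichotomy hF hs0).resolve_left fun h1 => ?_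
  obtain ⟨a, ha⟩ := FiniteField.exists_nonsquare hF
  have ha0 : a ≠ 0 := by rintro rfl; exact ha IsSquare.zero
  obtain ⟨k, hk⟩ := (hδ (a ^ 2)).1 ⟨pow_ne_zero 2 ha0, IsSquare.sq a⟩
  refine ha ((FiniteField.isSquare_iff hF ha0).2 ?_)
  rw [hhalf, pow_mul, ← hk, ← pow_mul, mul_comm, pow_mul, hδm, h1, one_pow]

lemma exists_paley1fst_eq (hm : Fintype.card F = 4 * m + 1)
    (hδ : ∀ x : F, (x ≠ 0 ∧ IsSquare x) ↔ ∃ i : ℕ, δ ^ i = x) {x : F} (hx : IsSquare x) :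
    ∃ a, paley1fst δ m a = x := by
  by_cases hx0 : x = 0
  · exact ⟨none, by rw [hx0, paley1fst]⟩
  have hm0 : 0 < m := by have := Fintype.one_lt_card (α := F); omega
  have hδm := pow_eq_neg_one_of_generates_squares hm hδ
  obtain ⟨k, rfl⟩ := (hδ x).1 ⟨hx0, hx⟩
  set n := k + 2 * m - 1
  have hk : δ ^ k = (-1) ^ (n / m) * δ ^ (n % m + 1) := by
    calc δ ^ k = δ ^ k * (δ ^ m) ^ 2 := by rw [hδm]; ring
      _ = δ ^ (m * (n / m) + n % m + 1) := by
        rw [Nat.div_add_mod, ← pow_mul, ← pow_add]; congr 1; omega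
      _ = (-1) ^ (n / m) * δ ^ (n % m + 1) := by rw [add_assoc, pow_add, pow_mul, hδm]
  rcases neg_one_pow_eq_or F (n / m) with h | h
  · exact ⟨some (⟨n % m, Nat.mod_lt _ hm0⟩, 0), by simp [paley1fst, hk, h]⟩
  · exact ⟨some (⟨n % m, Nat.mod_lt _ hm0⟩, 2), by simp [paley1fst, hk, h]⟩

lemma paley1snd_bijective (hm : Fintype.card F = 4 * m + 1)
    (hδ : ∀ x : F, (x ≠ 0 ∧ IsSquare x) ↔ ∃ i : ℕ, δ ^ i = x) {t : F} (ht : t ^ 2 = -1)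
    {r : Fin m → F} (hr : ∀ i, r i ^ 2 = δ ^ ((i : ℕ) + 1)) : Bijective (paley1snd t r) := by
  refine (Fintype.bijective_iff_surjective_and_card _).2 ⟨fun u => ?_, by simp [hm]; ring⟩
  obtain ⟨a, ha⟩ := exists_paley1fst_eq hm hδ (IsSquare.sq u)
  rw [← paley1snd_sq ht hr, sq_eq_sq_iff_eq_or_eq_neg] at ha
  rcases ha with ha | ha
  · exact ⟨a, ha⟩
  · refine ⟨(paley1rot m)^[2] a, ?_⟩
    rw [iterate_succ_apply', iterate_one, paley1snd_rot ht, paley1snd_rot ht, ← mul_assoc, ← sq,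
      ht, ha, neg_one_mul, neg_neg]

lemma card_Tdiff_paley1 [DecidableEq F] (hm : Fintype.card F = 4 * m + 1)
    (hδ : ∀ x : F, (x ≠ 0 ∧ IsSquare x) ↔ ∃ i : ℕ, δ ^ i = x) {Fq : Type*} [AddCommGroup Fq]
    (φ : Option (Fin m × Fin 4) → Fq) {h : F} (hh : h ≠ 0) :
    Multiset.card (Tdiff (paley1fst δ m) φ h) = 4 * m := by
  obtain ⟨t, ht⟩ : ∃ t : F, t ^ 2 = -1 := by
    obtain ⟨t, ht⟩ := FiniteField.isSquare_neg_one_iff.2 (by omega : Fintype.card F % 4 ≠ 3)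
    exact ⟨t, by rw [sq, ← ht]⟩
  have hr : ∀ i : Fin m, ∃ r, r ^ 2 = δ ^ ((i : ℕ) + 1) := fun i => by
    obtain ⟨-, r, hr⟩ := (hδ _).2 ⟨_, rfl⟩
    exact ⟨r, by rw [sq, hr]⟩
  choose r hr using hr
  rw [card_Tdiff_of_eq_sq φ (.ofBijective _ (paley1snd_bijective hm hδ ht hr))
    (fun a => (paley1snd_sq ht hr a).symm) (Ring.two_ne_zero (ringChar_ne_two_of_card_eq hm)) hh,
    hm, Nat.add_sub_cancel]

end GeneratorOfSquares

lemma Tdiff_paley1_eq_bind {m : ℕ} {Fp Fq : Type*} [Field Fp] [DecidableEq Fp] [Field Fq]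
    (δ : Fp) {ξ : Fq} (hξ : ξ ^ 2 = -1) (y : Fin m → Fq) (h : Fp) :
    ∃ D : Multiset Fq, Tdiff (paley1fst δ m) (paley1snd ξ y) h =
      ({1, -1, ξ, -ξ} : Multiset Fq).bind fun c => D.map (c * ·) := by
  obtain ⟨D, hD⟩ := Tdiff_eq_bind_of_rotation (paley1fst_rot δ) (paley1snd_rot hξ y)
    paley1rot_iterate_four (fun a b ha hb => (eq_none_of_paley1rot_iterate_two ha).trans
      (eq_none_of_paley1rot_iterate_two hb).symm) h
  have hpow : (Multiset.range 4).map ((-ξ) ^ ·) = {1, -1, ξ, -ξ} := by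
    have h3 : (-ξ) ^ 3 = ξ := by linear_combination -ξ * hξ
    simp only [Multiset.range_succ, Multiset.range_zero, Multiset.map_cons, Multiset.map_zero,
      pow_zero, pow_one, neg_sq, hξ, h3, Multiset.insert_eq_cons, ← Multiset.cons_zero]
    rw [Multiset.cons_swap (-ξ) 1, Multiset.cons_swap (-1 : Fq) 1, Multiset.cons_swap ξ 1,
      Multiset.cons_swap ξ (-1)]
  exact ⟨D, hpow ▸ hD⟩

theorem paper_stmt_15_general {Fp Fq : Type*} [Field Fp] [Fintype Fp] [DecidableEq Fp] [Field Fq]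
    (m : ℕ) (hm : Fintype.card Fp = 4 * m + 1)
    (δ : Fp) (hδ : ∀ x : Fp, (x ≠ 0 ∧ IsSquare x) ↔ ∃ i : ℕ, δ ^ i = x)
    (ξ : Fq) (hξ : ξ ^ 2 = -1)
    (y : Fin m → Fq) :
    ∀ h : Fp, h ≠ 0 →
      (∃ Dh : Multiset Fq,
        Tdiff (paley1fst δ m) (paley1snd ξ y) h =
          (({1, -1, ξ, -ξ} : Multiset Fq).bind fun c => Dh.map fun z => c * z) ∧
        Multiset.card Dh = m) ∧
      Tdiff (paley1fst δ m) (paley1snd ξ y) h =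
        Tdiff (paley1fst δ m) (paley1snd ξ y) (-h) := by
  intro h hh
  obtain ⟨D, hD⟩ := Tdiff_paley1_eq_bind δ hξ y h
  refine ⟨⟨D, hD, ?_⟩, ?_⟩
  · have hcard := card_Tdiff_paley1 hm hδ (paley1snd ξ y) hh
    rw [hD, Multiset.card_bind] at hcard
    simp only [Multiset.insert_eq_cons, Multiset.map_cons, Multiset.map_singleton,
      Multiset.sum_cons, Multiset.sum_singleton, comp_apply, Multiset.card_map] at hcard
    omega
  · have hsymm : ({1, -1, ξ, -ξ} : Multiset Fq).map Neg.neg = {1, -1, ξ, -ξ} := by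
      simp only [Multiset.insert_eq_cons, ← Multiset.cons_zero, Multiset.map_cons,
        Multiset.map_zero, neg_neg]
      rw [Multiset.cons_swap (-1 : Fq), Multiset.cons_swap (-ξ)]
    rw [Tdiff_neg, hD, Multiset.map_neg_bind_mul hsymm]

/-- Lemma 3.5: for `p ≡ 1 (mod 4)` a prime power, `δ` a generator of the nonzero squares
of `F_p`, `ξ` a primitive 4th root of unity in `F_q` and arbitrary `y₁,…,y_m ∈ F_q^*`
(`m = (p-1)/4`), for each nonzero `h ∈ F_p` the multiset `T_h` of second-coordinate
differences has the form `{1,-1,ξ,-ξ} · D_h` for a multiset `D_h` of size `(p-1)/4`,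
and `D_h = D_{-h}`. -/
theorem paper_stmt_15 {Fp Fq : Type*} [Field Fp] [Fintype Fp] [DecidableEq Fp] [Field Fq]
    (m : ℕ) (hm : Fintype.card Fp = 4 * m + 1)
    (δ : Fp) (hδ : ∀ x : Fp, (x ≠ 0 ∧ IsSquare x) ↔ ∃ i : ℕ, δ ^ i = x)
    (ξ : Fq) (hξ : ξ ^ 2 = -1) (h2 : (2 : Fq) ≠ 0)
    (y : Fin m → Fq) (hy : ∀ i, y i ≠ 0) :
    ∀ h : Fp, h ≠ 0 →
      (∃ Dh : Multiset Fq,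
        Tdiff (paley1fst δ m) (paley1snd ξ y) h =
          (({1, -1, ξ, -ξ} : Multiset Fq).bind fun c => Dh.map fun z => c * z) ∧
        Multiset.card Dh = m) ∧
      Tdiff (paley1fst δ m) (paley1snd ξ y) h =
        Tdiff (paley1fst δ m) (paley1snd ξ y) (-h) :=
  paper_stmt_15_general m hm δ hδ ξ hξ y
end

section
/- Let $p \equiv 1 \pmod 4$ be a prime power and $d \geq 4$. Let $\alpha$ be a permutation of a $d$-set $Y$ that is a product of $u = d/l$ disjoint cycles each of length $l \geq 2$, and let $a \in \mathbb{Z}_d$. If $l \geq 3$, or $l = 2$ and $a \notin \{1, d-1\}$, then there exists a bijection $\pi : Y \to \mathbb{Z}_d$ such that $\pi(y) - \pi(\alpha(y)) \not\equiv a \pmod{d}$ for every $y \in Y$. -/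
/-!
Up to relabelling, `α` is the shift `p ↦ p + (0, 1)` on `ZMod u × ZMod l`, since both have cycle
type `l^u` and permutations with equal cycle type are conjugate. On this model the mixed-radix
labelling `(i, j) ↦ i + u j` makes every difference `π y - π (α y)` equal to `-u`, and labelling
the cycles backwards makes them all `u`; for `l ≥ 3` these differ, so one of the two avoids `a`.
For `l = 2` the labelling `(i, j) ↦ j + 2 i` makes every difference `±1`.
-/

open Finset Function

namespace Equiv.Perm

theorem cycleType_permCongr {X Y : Type*} [Fintype X] [DecidableEq X] [Fintype Y]
    [DecidableEq Y] (e : X ≃ Y) (σ : Perm X) : (e.permCongr σ).cycleType = σ.cycleType := by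
  let f : X ≃ {_y : Y // True} := e.trans (subtypeUnivEquiv fun _ => trivial).symm
  have : e.permCongr σ = σ.extendDomain f := by
    ext y
    simp [extendDomain_apply_subtype _ f trivial, f, permCongr_apply]
  rw [this, cycleType_extendDomain]

theorem exists_equiv_semiconj_of_cycleType_eq {X Y : Type*} [Fintype X] [DecidableEq X]
    [Fintype Y] [DecidableEq Y] {σ : Perm X} {τ : Perm Y}
    (hcard : Fintype.card X = Fintype.card Y) (h : σ.cycleType = τ.cycleType) :
    ∃ e : X ≃ Y, Semiconj e σ τ := by
  let g := Fintype.equivOfCardEq hcard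
  obtain ⟨c, hc⟩ := isConj_iff.mp
    (isConj_of_cycleType_eq ((cycleType_permCongr g σ).trans h))
  refine ⟨g.trans c, fun x => ?_⟩
  rw [← hc]
  simp [permCongr_apply]

theorem cycleType_eq_replicate_of_forall_card_support_cycleOf {α : Type*} [Fintype α]
    [DecidableEq α] {σ : Perm α} {n : ℕ} (hn : 0 < n)
    (h : ∀ x, #(σ.cycleOf x).support = n) :
    σ.cycleType = Multiset.replicate (Fintype.card α / n) n := by
  have hall : ∀ m ∈ σ.cycleType, m = n := by
    intro m hm
    rw [cycleType_def, Multiset.mem_map] at hm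
    obtain ⟨c, hc, rfl⟩ := hm
    obtain ⟨x, hx⟩ := (mem_cycleFactorsFinset_iff.mp hc).1.nonempty_support
    rw [cycle_is_cycleOf hx hc]
    exact h x
  have hsupp : σ.support = univ := by
    refine eq_univ_of_forall fun x => ?_
    have : (σ.cycleOf x).support.Nonempty := card_pos.mp (by rw [h x]; exact hn)
    exact mem_support.mpr (support_cycleOf_nonempty.mp this)
  have hsum : Multiset.card σ.cycleType * n = Fintype.card α := by
    rw [← card_univ, ← hsupp, ← sum_cycleType, Multiset.eq_replicate_card.mpr hall,
      Multiset.sum_replicate, smul_eq_mul, Multiset.card_replicate]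
  rw [← hsum, Nat.mul_div_cancel _ hn]
  exact Multiset.eq_replicate_card.mpr hall

theorem sameCycle_addRight_iff {G : Type*} [AddGroup G] {c x y : G} :
    (Equiv.addRight c).SameCycle x y ↔ -x + y ∈ AddSubgroup.zmultiples c := by
  simp only [SameCycle, Equiv.zsmul_addRight, Equiv.coe_addRight, AddSubgroup.mem_zmultiples_iff]
  exact exists_congr fun n => by rw [eq_neg_add_iff_add_eq]

theorem cycleType_addRight {G : Type*} [AddGroup G] [Fintype G] [DecidableEq G] {c : G}
    (hc : c ≠ 0) :
    (Equiv.addRight c).cycleType =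
      Multiset.replicate (Fintype.card G / addOrderOf c) (addOrderOf c) := by
  refine cycleType_eq_replicate_of_forall_card_support_cycleOf
    (addOrderOf_pos_iff.mpr (isOfFinAddOrder_of_finite c)) fun x => ?_
  have hx : Equiv.addRight c x ≠ x := by simpa using hc
  rw [← Fintype.card_zmultiples, ← Fintype.card_coe]
  refine Fintype.card_congr ((Equiv.subtypeEquivRight fun y => ?_).trans
    ((Equiv.addLeft (-x)).subtypeEquiv fun y => Iff.rfl))
  rw [mem_support_cycleOf_iff' hx, sameCycle_addRight_iff]
  rfl

end Equiv.Perm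

namespace ZMod

def mixedRadix (m n : ℕ) {d : ℕ} (p : ZMod m × ZMod n) : ZMod d :=
  p.1.val + m * p.2.val

variable {m n d : ℕ}

theorem mixedRadix_eq_natCast (p : ZMod m × ZMod n) :
    (mixedRadix m n p : ZMod d) = ((p.1.val + m * p.2.val : ℕ) : ZMod d) := by
  simp [mixedRadix]

theorem mixedRadix_bijective [NeZero m] [NeZero n] [NeZero d] (hd : d = m * n) :
    Bijective (mixedRadix m n : ZMod m × ZMod n → ZMod d) := by
  have hlt : ∀ p : ZMod m × ZMod n, p.1.val + m * p.2.val < d := fun p => by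
    have := p.1.val_lt; have := p.2.val_lt; rw [hd]; nlinarith
  rw [Fintype.bijective_iff_injective_and_card]
  refine ⟨fun p q hpq => ?_, by simp [hd]⟩
  rw [mixedRadix_eq_natCast, mixedRadix_eq_natCast] at hpq
  have h := congrArg val hpq
  rw [val_cast_of_lt (hlt p), val_cast_of_lt (hlt q)] at h
  have h1 : p.1.val = q.1.val := by
    simpa [Nat.add_mul_mod_self_left, Nat.mod_eq_of_lt (val_lt _)] using congrArg (· % m) h
  have h2 : p.2.val = q.2.val :=
    Nat.eq_of_mul_eq_mul_left (Nat.pos_of_neZero m) (by omega)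
  exact Prod.ext (val_injective _ h1) (val_injective _ h2)

theorem mixedRadix_add_snd [NeZero n] (hd : d = m * n) (i : ZMod m) (j k : ZMod n) :
    (mixedRadix m n (i, j + k) : ZMod d) = mixedRadix m n (i, j) + (m * k.val : ZMod d) := by
  subst hd
  have hmod (x : ℕ) : ((m * (x % n) : ℕ) : ZMod (m * n)) = ((m * x : ℕ) : ZMod (m * n)) := by
    rw [natCast_eq_natCast_iff', Nat.mul_mod_mul_left, Nat.mul_mod_mul_left, Nat.mod_mod]
  rw [mixedRadix_eq_natCast, mixedRadix_eq_natCast, val_add, Nat.cast_add, hmod]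
  push_cast
  ring

end ZMod

open ZMod

theorem exists_bijective_sub_add_ne_of_three_le {u l d : ℕ} [NeZero u] [NeZero l] [NeZero d]
    (hd : d = u * l) (hl : 3 ≤ l) (a : ZMod d) :
    ∃ F : ZMod u × ZMod l → ZMod d, Bijective F ∧ ∀ p, F p - F (p + (0, 1)) ≠ a := by
  have : Fact (1 < l) := ⟨by omega⟩
  have hstep (p : ZMod u × ZMod l) :
      (mixedRadix u l (p + (0, 1)) : ZMod d) = mixedRadix u l p + (u : ZMod d) := by
    rw [show p + (0, 1) = (p.1, p.2 + 1) from Prod.ext (add_zero _) rfl,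
      mixedRadix_add_snd hd, val_one, Nat.cast_one, mul_one]
  have hu : (u : ZMod d) ≠ -u := by
    intro h
    have h2u : ((2 * u : ℕ) : ZMod d) = 0 := by push_cast; linear_combination h
    have := Nat.le_of_dvd (by have := Nat.pos_of_neZero u; omega)
      ((natCast_eq_zero_iff _ _).mp h2u)
    nlinarith [Nat.pos_of_neZero u]
  by_cases ha : a = -u
  · let ρ : ZMod u × ZMod l ≃ ZMod u × ZMod l := (Equiv.refl _).prodCongr (Equiv.neg _)
    refine ⟨mixedRadix u l ∘ ρ, (mixedRadix_bijective hd).comp ρ.bijective, fun p => ?_⟩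
    have hρ : ρ p = ρ (p + (0, 1)) + (0, 1) := by
      ext <;> simp [ρ]
    rw [comp_apply, comp_apply, hρ, hstep, ha]
    intro h
    exact hu (by linear_combination h)
  · exact ⟨mixedRadix u l, mixedRadix_bijective hd, fun p => by rw [hstep]; simpa using Ne.symm ha⟩

theorem exists_bijective_sub_add_ne_of_two {u d : ℕ} [NeZero u] [NeZero d]
    (hd : d = u * 2) {a : ZMod d} (ha₁ : a ≠ 1) (ha₂ : a ≠ -1) :
    ∃ F : ZMod u × ZMod 2 → ZMod d, Bijective F ∧ ∀ p, F p - F (p + (0, 1)) ≠ a := by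
  refine ⟨mixedRadix 2 u ∘ Prod.swap,
    (mixedRadix_bijective (by rw [hd, mul_comm])).comp (Equiv.prodComm _ _).bijective, ?_⟩
  rintro ⟨i, j⟩
  have h1 : (1 : ZMod 2).val = 1 := rfl
  obtain rfl | rfl : j = 0 ∨ j = 1 := by revert j; decide
  · simp only [comp_apply, Prod.mk_add_mk, add_zero, zero_add, Prod.swap_prod_mk, mixedRadix,
      val_zero, h1]
    simpa using ha₂.symm
  · simp only [comp_apply, Prod.mk_add_mk, add_zero, Prod.swap_prod_mk, mixedRadix,
      show (1 + 1 : ZMod 2) = 0 from rfl, val_zero, h1]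
    simpa using ha₁.symm

theorem cycleType_addRight_zero_one {u l : ℕ} [NeZero u] [NeZero l] (hl : 1 < l) :
    (Equiv.addRight ((0, 1) : ZMod u × ZMod l)).cycleType = Multiset.replicate u l := by
  have horder : addOrderOf ((0, 1) : ZMod u × ZMod l) = l := by
    rw [Prod.addOrderOf, addOrderOf_zero, ZMod.addOrderOf_one, Nat.lcm_one_left]
  have hne : ((0, 1) : ZMod u × ZMod l) ≠ 0 := fun h => by
    rw [h, addOrderOf_zero] at horder
    omega
  rw [Equiv.Perm.cycleType_addRight hne, horder, Fintype.card_prod, ZMod.card, ZMod.card,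
    Nat.mul_div_cancel _ (by omega)]

/-- The combinatorial core of Theorem 3.8: let `d ≥ 4`, let `α` be a permutation of a
`d`-set `Y` which is a product of `u = d/l` disjoint cycles each of length `l ≥ 2`, and
let `a ∈ ℤ_d`.  If `l ≥ 3`, or `l = 2` and `a ∉ {1, d-1}`, then there is a bijection
`π : Y → ℤ_d` with `π y - π (α y) ≢ a (mod d)` for every `y ∈ Y`. -/
theorem paper_stmt_16 {Y : Type*} [Fintype Y] [DecidableEq Y] (d u l : ℕ)
    (hd : 4 ≤ d) (hl : 2 ≤ l) (hdu : d = u * l) (hY : Fintype.card Y = d)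
    (α : Equiv.Perm Y) (hα : α.cycleType = Multiset.replicate u l)
    (a : ZMod d) (ha : 3 ≤ l ∨ (l = 2 ∧ a ≠ 1 ∧ a ≠ -1)) :
    ∃ π : Y → ZMod d, Function.Bijective π ∧ ∀ y : Y, π y - π (α y) ≠ a := by
  have hu : 0 < u := Nat.pos_of_ne_zero fun hu => by simp [hu] at hdu; omega
  have : NeZero u := ⟨hu.ne'⟩
  have : NeZero l := ⟨by omega⟩
  have : NeZero d := ⟨by omega⟩
  obtain ⟨e, he⟩ := Equiv.Perm.exists_equiv_semiconj_of_cycleType_eq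
    (τ := Equiv.addRight ((0, 1) : ZMod u × ZMod l)) (by simp [hY, hdu])
    (hα.trans (cycleType_addRight_zero_one hl).symm)
  obtain ⟨F, hF, hFa⟩ : ∃ F : ZMod u × ZMod l → ZMod d,
      Bijective F ∧ ∀ p, F p - F (p + (0, 1)) ≠ a := by
    rcases ha with hl3 | ⟨rfl, ha₁, ha₂⟩
    · exact exists_bijective_sub_add_ne_of_three_le hdu hl3 a
    · exact exists_bijective_sub_add_ne_of_two hdu ha₁ ha₂
  exact ⟨F ∘ e, hF.comp e.bijective, fun y => by simpa [he y] using hFa (e y)⟩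
end
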